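/- Fix δ ∈ (0,1/3], let μ be the Borel measure on ℝ determined by μ([j + i·3^{−n}, j + (i+1)·3^{−n})) = δ^{n−k(i)}(1−2δ)^{k(i)} for all integers j, n ≥ 0 and 0 ≤ i < 3^n (where k(i) is the number of digits equal to 1 among the first n ternary digits of i), and for integers 0 ≤ k ≤ n let K(n,k) be the union of those triadic intervals I ⊆ [0,1) of length 3^{−n} with μ(I) ≥ δ^k (1−2δ)^{n−k}. If 2δn ≤ k ≤ (2/3)n, then the Lebesgue measure of K(n,k) satisfies |K(n,k)| ≤ 3^{−n}·e^{k[1 + log(1/δ)]}. -/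

import Mathlib

open MeasureTheory Set

noncomputable section

/-- The number of ternary (base-3) digits of `i` equal to `1`. -/
def ternaryOnes (i : ℕ) : ℕ := (Nat.digits 3 i).count 1

/-- The triadic mass assignment determining the measure `μ`. -/
def ternarySpec (δ : ℝ) (μ : Measure ℝ) : Prop :=
  ∀ (j : ℤ) (n i : ℕ), i < 3 ^ n →
    μ (Set.Ico ((j : ℝ) + (i : ℝ) / 3 ^ n) ((j : ℝ) + ((i : ℝ) + 1) / 3 ^ n)) =
      ENNReal.ofReal (δ ^ (n - ternaryOnes i) * (1 - 2 * δ) ^ ternaryOnes i)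

/-- The triadic interval `[i·3⁻ⁿ, (i+1)·3⁻ⁿ) ⊆ [0,1)` of generation `n`, `0 ≤ i < 3 ^ n`. -/
def triIco (n i : ℕ) : Set ℝ := Set.Ico ((i : ℝ) / 3 ^ n) (((i : ℝ) + 1) / 3 ^ n)

/-- Indices `0 ≤ i < 3 ^ n` of the "heavy" triadic intervals of generation `n` inside `[0,1)`,
those with `μ(I) ≥ δ ^ k · (1 - 2δ) ^ (n - k)`. -/
def goodIdx (δ : ℝ) (μ : Measure ℝ) (n k : ℕ) : Set ℕ :=
  {i | i < 3 ^ n ∧ ENNReal.ofReal (δ ^ k * (1 - 2 * δ) ^ (n - k)) ≤ μ (triIco n i)}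

/-- `K(n,k)`: the union of the triadic intervals `I ⊆ [0,1)` of generation `n` with
`μ(I) ≥ δ ^ k · (1 - 2δ) ^ (n - k)`. -/
def Kset (δ : ℝ) (μ : Measure ℝ) (n k : ℕ) : Set ℝ := ⋃ i ∈ goodIdx δ μ n k, triIco n i

/-!
An interval of generation `n` whose index has `j` ternary digits equal to `1` has mass
`δ^(n-j) (1-2δ)^j`; since `δ < 1 - 2δ`, it is heavy only if it has at most `k` digits different
from `1`. Counting such indices is a Chernoff bound: with `λ = k / (2n)`,
`#{i : n - j(i) ≤ k} ≤ λ⁻ᵏ ∑ᵢ λ^(n - j(i)) = λ⁻ᵏ (1 + 2λ)ⁿ ≤ (1/δ)ᵏ eᵏ`,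
using `2δn ≤ k` and `(1 + k/n)ⁿ ≤ eᵏ`. For `δ = 1/3` all intervals are heavy, and the bound
exceeds `1` because `k ≥ 2n/3` and `log 3 ≤ 2`.
-/

open Finset

lemma ternaryOnes_le_of_lt_pow {n i : ℕ} (h : i < 3 ^ n) : ternaryOnes i ≤ n := by
  rcases Nat.eq_zero_or_pos i with rfl | hi
  · simp [ternaryOnes]
  · calc ternaryOnes i ≤ (Nat.digits 3 i).length := List.count_le_length
      _ ≤ n := by
        rw [Nat.length_digits 3 i (by norm_num) hi.ne']
        have := Nat.log_lt_of_lt_pow hi.ne' h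
        omega

lemma ternaryOnes_three_mul_add (q : ℕ) {r : ℕ} (hr : r < 3) :
    ternaryOnes (3 * q + r) = ternaryOnes q + if r = 1 then 1 else 0 := by
  rcases Nat.eq_zero_or_pos (3 * q + r) with h | h
  · obtain ⟨rfl, rfl⟩ : q = 0 ∧ r = 0 := by omega
    simp [ternaryOnes]
  · rw [ternaryOnes, Nat.digits_def' (by norm_num) h, List.count_cons,
      show (3 * q + r) % 3 = r by omega, show (3 * q + r) / 3 = q by omega]
    simp [ternaryOnes]

lemma Finset.sum_range_three_mul {M : Type*} [AddCommMonoid M] (m : ℕ) (f : ℕ → M) :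
    ∑ i ∈ range (3 * m), f i = ∑ q ∈ range m, (f (3 * q) + f (3 * q + 1) + f (3 * q + 2)) := by
  induction m with
  | zero => simp
  | succ m ih =>
    rw [show 3 * (m + 1) = 3 * m + 1 + 1 + 1 by ring, sum_range_succ, sum_range_succ,
      sum_range_succ, ih, sum_range_succ]
    simp only [add_assoc]

lemma sum_range_pow_sub_ternaryOnes {R : Type*} [CommSemiring R] (x : R) (n : ℕ) :
    ∑ i ∈ range (3 ^ n), x ^ (n - ternaryOnes i) = (1 + 2 * x) ^ n := by
  induction n with
  | zero => simp [ternaryOnes]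
  | succ n ih =>
    rw [pow_succ', sum_range_three_mul, pow_succ', ← ih, mul_sum]
    refine sum_congr rfl fun q hq => ?_
    have hq := ternaryOnes_le_of_lt_pow (mem_range.mp hq)
    have h0 : ternaryOnes (3 * q) = ternaryOnes q := by
      simpa using ternaryOnes_three_mul_add q (r := 0) (by norm_num)
    have h1 : ternaryOnes (3 * q + 1) = ternaryOnes q + 1 := by
      simpa using ternaryOnes_three_mul_add q (r := 1) (by norm_num)
    have h2 : ternaryOnes (3 * q + 2) = ternaryOnes q := by
      simpa using ternaryOnes_three_mul_add q (r := 2) (by norm_num)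
    rw [h0, h1, h2, show n + 1 - ternaryOnes q = n - ternaryOnes q + 1 by omega,
      show n + 1 - (ternaryOnes q + 1) = n - ternaryOnes q by omega]
    ring

lemma le_of_pow_mul_pow_sub_le {R : Type*} [CommSemiring R] [LinearOrder R] [IsStrictOrderedRing R]
    {a b : R} (ha : 0 < a) (hab : a < b) {n k m : ℕ} (hm : m ≤ n)
    (h : a ^ k * b ^ (n - k) ≤ a ^ m * b ^ (n - m)) : m ≤ k := by
  by_contra! hkm
  have hb : 0 < b := ha.trans hab
  refine h.not_gt ?_
  calc a ^ m * b ^ (n - m) = a ^ k * (a ^ (m - k) * b ^ (n - m)) := by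
        rw [← mul_assoc, ← pow_add, Nat.add_sub_cancel' hkm.le]
    _ < a ^ k * (b ^ (m - k) * b ^ (n - m)) := by gcongr; omega
    _ = a ^ k * b ^ (n - k) := by rw [← pow_add]; congr 2; omega

def fewNonOnesIdx (n k : ℕ) : Finset ℕ := {i ∈ range (3 ^ n) | n - ternaryOnes i ≤ k}

lemma card_fewNonOnesIdx_mul_pow_le {R : Type*} [CommSemiring R] [PartialOrder R]
    [IsOrderedRing R] {x : R} (hx₀ : 0 ≤ x) (hx₁ : x ≤ 1) (n k : ℕ) :
    #(fewNonOnesIdx n k) * x ^ k ≤ (1 + 2 * x) ^ n := by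
  rw [← sum_range_pow_sub_ternaryOnes, ← nsmul_eq_mul, ← sum_const]
  calc ∑ _i ∈ range (3 ^ n) with n - ternaryOnes _i ≤ k, x ^ k
      ≤ ∑ i ∈ range (3 ^ n) with n - ternaryOnes i ≤ k, x ^ (n - ternaryOnes i) :=
        sum_le_sum fun i hi => pow_le_pow_of_le_one hx₀ hx₁ (mem_filter.mp hi).2
    _ ≤ ∑ i ∈ range (3 ^ n), x ^ (n - ternaryOnes i) :=
        sum_le_sum_of_subset_of_nonneg (filter_subset _ _) fun _ _ _ => pow_nonneg hx₀ _

lemma card_fewNonOnesIdx_le_exp {δ : ℝ} (hδ : 0 < δ) {n k : ℕ}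
    (hk₁ : 2 * δ * n ≤ k) (hk₂ : k ≤ 2 * n) :
    (#(fewNonOnesIdx n k) : ℝ) ≤ Real.exp k * (1 / δ) ^ k := by
  rcases Nat.eq_zero_or_pos n with rfl | hn
  · obtain rfl : k = 0 := by omega
    simp only [pow_zero, Nat.cast_zero, Real.exp_zero, mul_one]
    exact_mod_cast (card_filter_le _ _).trans (card_range _).le
  have hn' : (0 : ℝ) < n := by exact_mod_cast hn
  set x : ℝ := k / (2 * n)
  have hδx : δ ≤ x := by rw [le_div_iff₀ (by positivity)]; linarith
  have hx₁ : x ≤ 1 := by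
    rw [div_le_one (by positivity)]; exact_mod_cast hk₂
  have hexp : (1 + 2 * x) ^ n ≤ Real.exp k := by
    convert Real.one_sub_div_pow_le_exp_neg (n := n) (t := -k)
      ((neg_nonpos.mpr k.cast_nonneg).trans hn'.le) using 2
    · simp only [x]; field_simp; ring
    · ring
  calc _ ≤ (1 + 2 * x) ^ n / x ^ k := by
        rw [le_div_iff₀ (pow_pos (hδ.trans_le hδx) k)]
        exact card_fewNonOnesIdx_mul_pow_le (hδ.trans_le hδx).le hx₁ n k
    _ ≤ Real.exp k / δ ^ k := by gcongr
    _ = Real.exp k * (1 / δ) ^ k := by rw [one_div_pow, mul_one_div]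

lemma volume_triIco (n i : ℕ) : volume (triIco n i) = ENNReal.ofReal ((3 ^ n)⁻¹) := by
  rw [triIco, Real.volume_Ico, ← sub_div, add_sub_cancel_left, one_div]

lemma volume_biUnion_triIco_le (n : ℕ) (s : Finset ℕ) :
    volume (⋃ i ∈ s, triIco n i) ≤ #s * ENNReal.ofReal ((3 ^ n)⁻¹) :=
  (measure_biUnion_finset_le s _).trans_eq <| by simp only [volume_triIco, sum_const, nsmul_eq_mul]

lemma triIco_subset_Ico {n i : ℕ} (hi : i < 3 ^ n) : triIco n i ⊆ Ico 0 1 := by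
  have hi' : (i : ℝ) + 1 ≤ 3 ^ n := by exact_mod_cast hi
  exact Ico_subset_Ico (by positivity) ((div_le_one (by positivity)).mpr hi')

lemma Kset_subset_Ico (δ : ℝ) (μ : Measure ℝ) (n k : ℕ) : Kset δ μ n k ⊆ Ico 0 1 :=
  iUnion₂_subset fun _ hi => triIco_subset_Ico hi.1

lemma ternarySpec.measure_triIco {δ : ℝ} {μ : Measure ℝ} (hμ : ternarySpec δ μ) {n i : ℕ}
    (hi : i < 3 ^ n) :
    μ (triIco n i) = ENNReal.ofReal (δ ^ (n - ternaryOnes i) * (1 - 2 * δ) ^ ternaryOnes i) := by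
  simpa [triIco] using hμ 0 n i hi

lemma ternarySpec.Kset_subset {δ : ℝ} {μ : Measure ℝ} (hμ : ternarySpec δ μ) (hδ₀ : 0 < δ)
    (hδ : δ < 1 / 3) (n k : ℕ) :
    Kset δ μ n k ⊆ ⋃ i ∈ fewNonOnesIdx n k, triIco n i := by
  refine biUnion_mono (fun i ⟨hi, hheavy⟩ => ?_) fun _ _ => subset_rfl
  have hones := ternaryOnes_le_of_lt_pow hi
  rw [hμ.measure_triIco hi, ENNReal.ofReal_le_ofReal_iff (mul_nonneg (pow_nonneg hδ₀.le _)
    (pow_nonneg (by linarith) _))] at hheavy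
  nth_rw 2 [← Nat.sub_sub_self hones] at hheavy
  exact mem_coe.mpr <| mem_filter.mpr ⟨mem_range.mpr hi,
    le_of_pow_mul_pow_sub_le (b := 1 - 2 * δ) hδ₀ (by linarith) (Nat.sub_le n _) hheavy⟩

lemma three_pow_le_exp_mul_three_pow {n k : ℕ} (h : 2 * n ≤ 3 * k) :
    (3 : ℝ) ^ n ≤ Real.exp k * 3 ^ k := by
  have h' : (2 * n : ℝ) ≤ 3 * k := by exact_mod_cast h
  rw [← Real.rpow_natCast, ← Real.rpow_natCast, Real.rpow_def_of_pos three_pos,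
    Real.rpow_def_of_pos three_pos, ← Real.exp_add, Real.exp_le_exp]
  nlinarith [Real.log_three_lt_d9, Real.log_pos (by norm_num : (1 : ℝ) < 3)]

/-- If `2δn ≤ k ≤ (2/3)n` then the Lebesgue measure of `K(n,k)` satisfies
`|K(n,k)| ≤ 3⁻ⁿ · exp(k(1 + log(1/δ)))`. -/
theorem lebesgue_Kset_upper_bound (δ : ℝ) (hδ0 : 0 < δ) (hδ : δ ≤ 1 / 3)
    (μ : Measure ℝ) (hμ : ternarySpec δ μ) (n k : ℕ)
    (hk1 : 2 * δ * n ≤ (k : ℝ)) (hk2 : (k : ℝ) ≤ 2 / 3 * n) :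
    volume (Kset δ μ n k) ≤
      ENNReal.ofReal ((3 : ℝ) ^ (-(n : ℤ)) * Real.exp ((k : ℝ) * (1 + Real.log (1 / δ)))) := by
  rw [mul_one_add, Real.exp_add, Real.exp_nat_mul, Real.exp_log (by positivity), zpow_neg,
    zpow_natCast]
  rcases hδ.lt_or_eq with hδ' | rfl
  · have hk : k ≤ 2 * n := by exact_mod_cast (show (k : ℝ) ≤ 2 * n by linarith)
    calc volume (Kset δ μ n k)
        ≤ volume (⋃ i ∈ fewNonOnesIdx n k, triIco n i) :=
          measure_mono (hμ.Kset_subset hδ0 hδ' n k)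
      _ ≤ #(fewNonOnesIdx n k) * ENNReal.ofReal ((3 ^ n)⁻¹) :=
          volume_biUnion_triIco_le n _
      _ ≤ _ := by
          rw [mul_comm, ← ENNReal.ofReal_natCast, ← ENNReal.ofReal_mul (by positivity)]
          gcongr
          exact card_fewNonOnesIdx_le_exp hδ0 hk1 hk
  · have hk : 2 * n ≤ 3 * k := by exact_mod_cast (show (2 * n : ℝ) ≤ 3 * k by linarith)
    calc volume (Kset (1 / 3) μ n k) ≤ volume (Ico (0 : ℝ) 1) :=
          measure_mono (Kset_subset_Ico _ μ n k)
      _ = 1 := Real.volume_Ico.trans (by norm_num)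
      _ ≤ _ := by
          rw [ENNReal.one_le_ofReal, one_div_one_div, inv_mul_eq_div, one_le_div (by positivity)]
          exact three_pow_le_exp_mul_three_pow hk
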